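/- arXiv:2106.12540 — 4 statements merged into one kernel-verified Lean document; each statement's English description precedes it below -/
import Mathlib

section
/- Let $L$ be a number field with ring of integers $\mathcal{O}_L$. The closure of $L^\times$ (the principal ideles, diagonally embedded) in the finite ideles $\mathbb{A}_{L,f}^\times$ equals $L^\times \cdot \overline{\mathcal{O}_L^\times}$, where $\overline{\mathcal{O}_L^\times}$ denotes the closure of the global units $\mathcal{O}_L^\times$ in $\widehat{\mathcal{O}}_L^\times = \prod_v \mathcal{O}_{L_v}^\times$. -/
open NumberField IsDedekindDomain

/-!
The everywhere-integral idèles `Ôˣ` form an open subgroup of `𝔸_{K,f}ˣ`. For any open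
subgroup `W` of a topological group, the closure of a subgroup `H` lies in `H * W`, so it equals
`H ⊔ closure (H ⊓ W)`. For `H = Kˣ` an element of `H ⊓ W` is a local unit at every
finite place, hence a global unit: `Kˣ ⊓ Ôˣ = 𝓞ˣ`.
-/

open scoped Pointwise in
theorem Subgroup.topologicalClosure_eq_sup_topologicalClosure_inf_of_isOpen {G : Type*}
    [Group G] [TopologicalSpace G] [IsTopologicalGroup G] (H W : Subgroup G)
    (hW : IsOpen (W : Set G)) :
    H.topologicalClosure = H ⊔ (H ⊓ W).topologicalClosure := by
  refine le_antisymm (fun x hx ↦ ?_)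
    (sup_le H.le_topologicalClosure (Subgroup.topologicalClosure_mono inf_le_left))
  have hxHW : x ∈ (H : Set G) * (W : Set G) := by
    rw [← hW.closure_mul]
    exact ⟨x, hx, 1, W.one_mem, mul_one x⟩
  obtain ⟨h, hh, w, hw, rfl⟩ := hxHW
  have hw_closure : w ∈ H.topologicalClosure := by
    simpa using H.topologicalClosure.mul_mem (H.le_topologicalClosure (H.inv_mem hh)) hx
  exact Subgroup.mul_mem_sup hh (hW.closure_inter ⟨hw_closure, hw⟩)

namespace IsDedekindDomain

variable (R K : Type*) [CommRing R] [IsDedekindDomain R] [Field K] [Algebra R K]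
  [IsFractionRing R K]

open HeightOneSpectrum

theorem HeightOneSpectrum.mem_range_unitsMap_of_valuation_le_one {k : Kˣ}
    (hk : ∀ v : HeightOneSpectrum R, v.valuation K k ≤ 1)
    (hk_inv : ∀ v : HeightOneSpectrum R, v.valuation K ↑k⁻¹ ≤ 1) :
    k ∈ (Units.map (algebraMap R K : R →* K)).range := by
  obtain ⟨r, hr⟩ := mem_integers_of_valuation_le_one K (k : K) hk
  obtain ⟨s, hs⟩ := mem_integers_of_valuation_le_one K (↑k⁻¹ : K) hk_inv
  have hrs : r * s = 1 := IsFractionRing.injective R K (by simp [hr, hs])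
  exact ⟨⟨r, s, hrs, mul_comm r s ▸ hrs⟩, Units.ext hr⟩

namespace FiniteAdeleRing

noncomputable def integralAdeles : Subring (FiniteAdeleRing R K) where
  carrier := {a | ∀ v, a v ∈ v.adicCompletionIntegers K}
  one_mem' := fun _ ↦ one_mem _
  mul_mem' ha hb v := mul_mem (ha v) (hb v)
  zero_mem' := fun _ ↦ zero_mem _
  add_mem' ha hb v := add_mem (ha v) (hb v)
  neg_mem' ha v := neg_mem (ha v)

theorem isOpen_integralAdeles : IsOpen (integralAdeles R K : Set (FiniteAdeleRing R K)) :=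
  RestrictedProduct.isOpen_forall_mem fun _ ↦ Valued.isOpen_valuationSubring _

noncomputable abbrev integralIdeles : Subgroup (FiniteAdeleRing R K)ˣ :=
  (integralAdeles R K).toSubmonoid.units

theorem isOpen_integralIdeles : IsOpen (integralIdeles R K : Set (FiniteAdeleRing R K)ˣ) :=
  Submonoid.isOpen_units (isOpen_integralAdeles R K)

theorem algebraMap_mem_integralAdeles_iff (k : K) :
    algebraMap K (FiniteAdeleRing R K) k ∈ integralAdeles R K ↔
      ∀ v : HeightOneSpectrum R, v.valuation K k ≤ 1 := by
  refine forall_congr' fun v ↦ ?_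
  rw [algebraMap_apply, mem_adicCompletionIntegers, valuedAdicCompletion_eq_valuation']

theorem range_unitEmbedding_inf_integralIdeles :
    (unitEmbedding R K).range ⊓ integralIdeles R K =
      (Units.map (algebraMap R (FiniteAdeleRing R K) : R →* FiniteAdeleRing R K)).range := by
  ext x
  constructor
  · rintro ⟨⟨k, rfl⟩, hk, hk_inv⟩
    obtain ⟨u, rfl⟩ := mem_range_unitsMap_of_valuation_le_one R K
      ((algebraMap_mem_integralAdeles_iff R K k).1 hk)
      ((algebraMap_mem_integralAdeles_iff R K ↑k⁻¹).1 hk_inv)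
    exact ⟨u, rfl⟩
  · rintro ⟨u, rfl⟩
    exact ⟨⟨Units.map (algebraMap R K : R →* K) u, rfl⟩,
      fun v ↦ coe_mem_adicCompletionIntegers (v := v) (u : R),
      fun v ↦ coe_mem_adicCompletionIntegers (v := v) (↑u⁻¹ : R)⟩

theorem topologicalClosure_range_unitEmbedding :
    (unitEmbedding R K).range.topologicalClosure =
      (unitEmbedding R K).range ⊔
        (Units.map (algebraMap R (FiniteAdeleRing R K) :
          R →* FiniteAdeleRing R K)).range.topologicalClosure := by
  rw [Subgroup.topologicalClosure_eq_sup_topologicalClosure_inf_of_isOpen _ _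
    (isOpen_integralIdeles R K), range_unitEmbedding_inf_integralIdeles]

end FiniteAdeleRing

end IsDedekindDomain

/-- For a number field `L`, the closure of the (diagonally embedded)
principal idèles `Lˣ` in the finite idèles `𝔸_{L,f}ˣ` equals
`Lˣ · closure(𝓞_Lˣ)`, where the closure of the global units `𝓞_Lˣ` is taken
(inside the finite idèles, where it agrees with the closure in `∏ v, 𝓞_{L_v}ˣ`). -/
theorem closure_principal_ideles (L : Type*) [Field L] [NumberField L] :
    (Subgroup.topologicalClosure
        ((Units.map (algebraMap L (FiniteAdeleRing (𝓞 L) L)).toMonoidHom).range)) =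
      ((Units.map (algebraMap L (FiniteAdeleRing (𝓞 L) L)).toMonoidHom).range) ⊔
        (Subgroup.topologicalClosure
          ((Units.map ((algebraMap L (FiniteAdeleRing (𝓞 L) L)).comp
              (algebraMap (𝓞 L) L)).toMonoidHom).range)) :=
  FiniteAdeleRing.topologicalClosure_range_unitEmbedding (𝓞 L) L
end

section
/- With notation as above, for integers $c \geq k > 0$ there is a group isomorphism $\mathcal{O}_{v,c}^\times / \mathcal{O}_{v,c+k}^\times \cong (\mathbb{F}^k[\epsilon])^\times / (\mathbb{F}^k)^\times$, where $\mathbb{F}^k = \mathcal{O}_{F_v}/\mathfrak{p}_v^k$ and $\mathbb{F}^k[\epsilon] = \mathbb{F}^k[X]/(X^2)$. In particular $\#(\mathcal{O}_{v,c}^\times / \mathcal{O}_{v,c+1}^\times) = q_v$ for $c \geq 1$, where $q_v$ is the residue field cardinality. -/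
/- Local setting as in Statement 6: `O` a DVR with uniformizer `ϖ` (the valuation ring
of a non-archimedean local field with residue cardinality `q`), `E` the maximal order of
a quadratic étale algebra, `O_{v,c} = O + ϖ^c·E`. -/

variable (O : Type*) [CommRing O] [IsDomain O] [IsDiscreteValuationRing O]
variable (E : Type*) [CommRing E] [Algebra O E]

/-- The order `O_{v,c} = O + ϖ^c·O_{E_v}` of conductor `ϖ^c`. -/
def condOrder (ϖ : O) (c : ℕ) : Subalgebra O E :=
  Algebra.adjoin O (Set.range fun y : E => ϖ ^ c • y)

/-- The unit group `O_{v,c}^×`, viewed as a subgroup of `O_{v,0}^× = O_{E_v}^×`. -/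
def condOrderUnits (ϖ : O) (c : ℕ) : Subgroup Eˣ where
  carrier := {u | (u : E) ∈ condOrder O E ϖ c ∧ ((u⁻¹ : Eˣ) : E) ∈ condOrder O E ϖ c}
  one_mem' := ⟨Subalgebra.one_mem _, by simpa using Subalgebra.one_mem _⟩
  mul_mem' := fun {a b} ha hb => ⟨by rw [Units.val_mul]; exact mul_mem ha.1 hb.1, by
    rw [mul_inv_rev, Units.val_mul]; exact mul_mem hb.2 ha.2⟩
  inv_mem' := fun {a} ha => ⟨ha.2, by simpa using ha.1⟩

/-! Write `E = O ⊕ Oα` with `α² = m + nα`. Then `O_{v,c} = O ⊕ Oγ` with `γ = ϖᶜα` and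
`γ² = ϖ²ᶜm + ϖᶜnγ`, so for `k ≤ c` the map `a + bγ ↦ ā + b̄ε` is a ring hom
`O_{v,c} → 𝔽^k[ε]`. It is surjective on units, since a lift `a + bγ` of a unit `ā + b̄ε` has
norm `a² + ϖᶜ(nab - ϖᶜmb²)`, a unit. A unit `ā + b̄ε` is a scalar iff `ϖᵏ ∣ b`, i.e. iff
`ϖ^{c+k}` divides the `α`-coordinate `ϖᶜb`, so the preimage of `(𝔽^k)^×` is `O_{v,c+k}^×`.
For the count, `t ↦ 1 + tε` identifies the additive group of `𝔽` with `𝔽[ε]^×/𝔽^×`. -/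

open Polynomial

local notation "𝔻[" R "]" => AdjoinRoot (X ^ 2 : R[X])
local notation "ε" => AdjoinRoot.root (X ^ 2 : Polynomial _)

def IsQuadraticBasis (R : Type*) {A : Type*} [CommRing R] [Ring A] [Algebra R A] (γ : A) :
    Prop :=
  ∀ x : A, ∃! p : R × R, x = algebraMap R A p.1 + p.2 • γ

def adjoinSmulGen {R A : Type*} [CommRing R] [Ring A] [Algebra R A] (r : R) (γ : A) :
    Algebra.adjoin R (Set.range fun y : A => r • y) :=
  ⟨r • γ, Algebra.subset_adjoin ⟨γ, rfl⟩⟩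

section Quadratic

variable {R A : Type*} [CommRing R] [CommRing A] [Algebra R A] {γ : A} {m n : R}

theorem algebraMap_add_smul_mul (hγ : γ * γ = algebraMap R A m + n • γ) (a b a' b' : R) :
    (algebraMap R A a + b • γ) * (algebraMap R A a' + b' • γ) =
      algebraMap R A (a * a' + m * b * b') + (a * b' + a' * b + n * b * b') • γ := by
  simp only [Algebra.smul_def, map_add, map_mul] at hγ ⊢
  linear_combination (algebraMap R A b * algebraMap R A b') * hγ

theorem algebraMap_add_smul_mul_conj (hγ : γ * γ = algebraMap R A m + n • γ) (a b : R) :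
    (algebraMap R A a + b • γ) * (algebraMap R A (a + n * b) + (-b) • γ) =
      algebraMap R A (a * a + n * a * b - m * b * b) := by
  rw [algebraMap_add_smul_mul hγ, show a * -b + (a + n * b) * b + n * b * -b = 0 by ring,
    zero_smul, add_zero]
  congr 1
  ring

theorem isUnit_algebraMap_add_smul (hγ : γ * γ = algebraMap R A m + n • γ) {a b : R}
    (hN : IsUnit (a * a + n * a * b - m * b * b)) : IsUnit (algebraMap R A a + b • γ) :=
  isUnit_of_mul_isUnit_left ((algebraMap_add_smul_mul_conj hγ a b).symm ▸ hN.map _)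

theorem adjoinSmulGen_mul_self (hγ : γ * γ = algebraMap R A m + n • γ) (r : R) :
    adjoinSmulGen r γ * adjoinSmulGen r γ =
      algebraMap R _ (r * r * m) + (r * n) • adjoinSmulGen r γ := by
  apply Subtype.ext
  change (r • γ) * (r • γ) = algebraMap R A (r * r * m) + (r * n) • (r • γ)
  rw [smul_mul_smul_comm, hγ]
  simp only [Algebra.smul_def, map_mul]
  ring

namespace IsQuadraticBasis

noncomputable def equiv (h : IsQuadraticBasis R γ) : (R × R) ≃ₗ[R] A :=
  LinearEquiv.ofBijective ((Algebra.linearMap R A).coprod (LinearMap.toSpanSingleton R A γ))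
    ⟨fun p q hpq => (h _).unique rfl (by simpa using hpq),
      fun x => (h x).exists.imp fun _ hp => hp.symm⟩

theorem equiv_apply (h : IsQuadraticBasis R γ) (p : R × R) :
    h.equiv p = algebraMap R A p.1 + p.2 • γ :=
  rfl

theorem equiv_symm_algebraMap_add_smul (h : IsQuadraticBasis R γ) (a b : R) :
    h.equiv.symm (algebraMap R A a + b • γ) = (a, b) := by
  rw [LinearEquiv.symm_apply_eq, equiv_apply]

theorem equiv_symm_algebraMap (h : IsQuadraticBasis R γ) (a : R) :
    h.equiv.symm (algebraMap R A a) = (a, 0) := by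
  simpa using h.equiv_symm_algebraMap_add_smul a 0

theorem equiv_symm_mul (h : IsQuadraticBasis R γ) (hγ : γ * γ = algebraMap R A m + n • γ)
    (x y : A) :
    h.equiv.symm (x * y) =
      ((h.equiv.symm x).1 * (h.equiv.symm y).1 + m * (h.equiv.symm x).2 * (h.equiv.symm y).2,
        (h.equiv.symm x).1 * (h.equiv.symm y).2 + (h.equiv.symm y).1 * (h.equiv.symm x).2
          + n * (h.equiv.symm x).2 * (h.equiv.symm y).2) := by
  rw [LinearEquiv.symm_apply_eq, equiv_apply, ← algebraMap_add_smul_mul hγ, ← h.equiv_apply,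
    ← h.equiv_apply, LinearEquiv.apply_symm_apply, LinearEquiv.apply_symm_apply]

theorem mul_self_eq (h : IsQuadraticBasis R γ) :
    γ * γ = algebraMap R A (h.equiv.symm (γ * γ)).1 + (h.equiv.symm (γ * γ)).2 • γ := by
  rw [← h.equiv_apply, LinearEquiv.apply_symm_apply]

noncomputable def lift {B : Type*} [CommRing B] (h : IsQuadraticBasis R γ)
    (hγ : γ * γ = algebraMap R A m + n • γ) (f : R →+* B) (e : B)
    (he : e * e = f m + f n * e) : A →+* B where
  toFun x := f (h.equiv.symm x).1 + f (h.equiv.symm x).2 * e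
  map_one' := by rw [← map_one (algebraMap R A), h.equiv_symm_algebraMap]; simp
  map_mul' x y := by
    simp only [h.equiv_symm_mul hγ, map_add, map_mul]
    linear_combination -(f (h.equiv.symm x).2 * f (h.equiv.symm y).2) * he
  map_zero' := by simp
  map_add' x y := by simp only [map_add, Prod.fst_add, Prod.snd_add]; ring

theorem mem_adjoin_smul_iff (h : IsQuadraticBasis R γ) (r : R) (x : A) :
    x ∈ Algebra.adjoin R (Set.range fun y : A => r • y) ↔ r ∣ (h.equiv.symm x).2 := by
  refine ⟨fun hx => ?_, fun ⟨b, hb⟩ => ?_⟩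
  · induction hx using Algebra.adjoin_induction with
    | mem x hx =>
      obtain ⟨y, rfl⟩ := hx
      rw [LinearEquiv.map_smul]
      exact Dvd.intro _ rfl
    | algebraMap a => simp [h.equiv_symm_algebraMap]
    | add x y _ _ hx hy => simpa using dvd_add hx hy
    | mul x y _ _ hx hy =>
      rw [h.equiv_symm_mul h.mul_self_eq]
      exact dvd_add (dvd_add (dvd_mul_of_dvd_right hy _) (dvd_mul_of_dvd_right hx _))
        (dvd_mul_of_dvd_left (dvd_mul_of_dvd_right hx _) _)
  · rw [← h.equiv.apply_symm_apply x, equiv_apply, hb, mul_smul]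
    exact add_mem (Subalgebra.algebraMap_mem _ _) (Algebra.subset_adjoin ⟨b • γ, rfl⟩)

theorem coe_algebraMap_add_smul_adjoinSmulGen (h : IsQuadraticBasis R γ) (r : R)
    (p : R × R) :
    ((algebraMap R _ p.1 + p.2 • adjoinSmulGen r γ : Algebra.adjoin R _) : A) =
      h.equiv (p.1, r * p.2) := by
  simp [adjoinSmulGen, equiv_apply, mul_smul, smul_comm p.2 r]

theorem adjoin_smul (h : IsQuadraticBasis R γ) {r : R} (hr : IsLeftRegular r) :
    IsQuadraticBasis R (adjoinSmulGen r γ) := by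
  intro x
  obtain ⟨b, hb⟩ := (h.mem_adjoin_smul_iff r x).1 x.2
  refine ⟨((h.equiv.symm x).1, b), Subtype.ext ?_, fun p hp => ?_⟩
  · rw [h.coe_algebraMap_add_smul_adjoinSmulGen, ← hb]
    exact (h.equiv.apply_symm_apply _).symm
  · have hpx := congrArg (fun y : Algebra.adjoin R _ => h.equiv.symm (y : A)) hp.symm
    simp only [h.coe_algebraMap_add_smul_adjoinSmulGen, LinearEquiv.symm_apply_apply,
      Prod.ext_iff, hb] at hpx
    exact Prod.ext hpx.1 (hr hpx.2)

theorem equiv_symm_coe_adjoin_smul (h : IsQuadraticBasis R γ) {r : R} (hr : IsLeftRegular r)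
    (x : Algebra.adjoin R (Set.range fun y : A => r • y)) :
    h.equiv.symm x =
      (((h.adjoin_smul hr).equiv.symm x).1, r * ((h.adjoin_smul hr).equiv.symm x).2) := by
  conv_lhs => rw [← (h.adjoin_smul hr).equiv.apply_symm_apply x]
  rw [equiv_apply, h.coe_algebraMap_add_smul_adjoinSmulGen, LinearEquiv.symm_apply_apply]

end IsQuadraticBasis

end Quadratic

namespace AdjoinRoot

variable {R : Type*} [CommRing R]

theorem root_X_sq_mul_self : (ε : 𝔻[R]) * ε = 0 := by
  rw [← sq, ← mk_X, ← map_pow, mk_self]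

theorem mk_X_sq (p : R[X]) :
    mk (X ^ 2) p = algebraMap R 𝔻[R] (p.coeff 0) + algebraMap R 𝔻[R] (p.coeff 1) * ε := by
  rw [algebraMap_eq, ← mk_C, ← mk_C, ← mk_X, ← map_mul, ← map_add, mk_eq_mk, X_pow_dvd_iff]
  intro d hd
  interval_cases d <;> simp [coeff_X]

theorem exists_eq_algebraMap_add_mul_root (z : 𝔻[R]) :
    ∃ s t : R, z = algebraMap R 𝔻[R] s + algebraMap R 𝔻[R] t * ε := by
  obtain ⟨p, rfl⟩ := mk_surjective z
  exact ⟨_, _, mk_X_sq p⟩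

theorem algebraMap_add_mul_root_mem_range_iff {s t : R} :
    algebraMap R 𝔻[R] s + algebraMap R 𝔻[R] t * ε ∈ Set.range (algebraMap R 𝔻[R]) ↔
      t = 0 := by
  refine ⟨fun ⟨r, hr⟩ => ?_, fun ht => ⟨s, by simp [ht]⟩⟩
  rw [algebraMap_eq, ← mk_C, ← mk_C, ← mk_C, ← mk_X, ← map_mul, ← map_add, mk_eq_mk,
    X_pow_dvd_iff] at hr
  simpa using hr 1 one_lt_two

noncomputable def evalRootZero : 𝔻[R] →+* R :=
  lift (RingHom.id R) 0 (by simp)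

theorem evalRootZero_algebraMap (s : R) : evalRootZero (algebraMap R 𝔻[R] s) = s := by
  simp [evalRootZero, algebraMap_eq]

theorem evalRootZero_root : evalRootZero (ε : 𝔻[R]) = 0 :=
  lift_root _

theorem isUnit_algebraMap_add_mul_root_iff {s t : R} :
    IsUnit (algebraMap R 𝔻[R] s + algebraMap R 𝔻[R] t * ε) ↔ IsUnit s := by
  refine ⟨fun h => ?_, fun hs => ?_⟩
  · have hs := h.map evalRootZero
    rwa [map_add, map_mul, evalRootZero_algebraMap, evalRootZero_algebraMap, evalRootZero_root,
      mul_zero, add_zero] at hs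
  · refine IsNilpotent.isUnit_add_left_of_commute ⟨2, ?_⟩ (hs.map _) (Commute.all _ _)
    rw [mul_pow, pow_two (root _), root_X_sq_mul_self, mul_zero]

theorem mem_range_unitsMap_iff (w : 𝔻[R]ˣ) :
    w ∈ (Units.map (algebraMap R 𝔻[R]).toMonoidHom).range ↔
      (w : 𝔻[R]) ∈ Set.range (algebraMap R 𝔻[R]) := by
  refine ⟨fun ⟨s, hs⟩ => ⟨s, congrArg Units.val hs⟩, fun ⟨s, hs⟩ => ?_⟩
  have hsu := w.isUnit.map evalRootZero
  rw [← hs, evalRootZero_algebraMap] at hsu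
  exact ⟨hsu.unit, Units.ext hs⟩

variable (R) in
noncomputable def oneAddMulRoot : Multiplicative R →* 𝔻[R]ˣ where
  toFun t :=
    { val := 1 + algebraMap R 𝔻[R] t.toAdd * ε
      inv := 1 - algebraMap R 𝔻[R] t.toAdd * ε
      val_inv := by
        linear_combination -(algebraMap R 𝔻[R] t.toAdd) ^ 2 * root_X_sq_mul_self (R := R)
      inv_val := by
        linear_combination -(algebraMap R 𝔻[R] t.toAdd) ^ 2 * root_X_sq_mul_self (R := R) }
  map_one' := by ext; simp
  map_mul' s t := by
    ext
    simp only [toAdd_mul, map_add, Units.val_mul]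
    linear_combination
      -(algebraMap R 𝔻[R] s.toAdd * algebraMap R 𝔻[R] t.toAdd) * root_X_sq_mul_self (R := R)

theorem val_oneAddMulRoot (t : Multiplicative R) :
    (oneAddMulRoot R t : 𝔻[R]) = algebraMap R 𝔻[R] 1 + algebraMap R 𝔻[R] t.toAdd * ε := by
  rw [map_one]
  rfl

noncomputable def unitsQuotientEquiv :
    Multiplicative R ≃* 𝔻[R]ˣ ⧸ (Units.map (algebraMap R 𝔻[R]).toMonoidHom).range :=
  MulEquiv.ofBijective ((QuotientGroup.mk' _).comp (oneAddMulRoot R)) <| by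
    refine ⟨(injective_iff_map_eq_one _).mpr fun t ht => ?_, fun w => ?_⟩
    · rw [MonoidHom.comp_apply, QuotientGroup.mk'_apply, QuotientGroup.eq_one_iff,
        mem_range_unitsMap_iff, val_oneAddMulRoot, algebraMap_add_mul_root_mem_range_iff] at ht
      exact toAdd_eq_zero.mp ht
    -- `s + tε = (1 + s⁻¹tε) s`
    obtain ⟨w, rfl⟩ := QuotientGroup.mk'_surjective _ w
    obtain ⟨s, t, hw⟩ := exists_eq_algebraMap_add_mul_root (w : 𝔻[R])
    obtain ⟨u, rfl⟩ : IsUnit s := isUnit_algebraMap_add_mul_root_iff.mp (hw ▸ w.isUnit)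
    refine ⟨Multiplicative.ofAdd (↑u⁻¹ * t), ?_⟩
    have hu : ((u⁻¹ : Rˣ) : R) * u = 1 := u.inv_mul
    rw [MonoidHom.comp_apply, QuotientGroup.mk'_apply, QuotientGroup.mk'_apply,
      ← QuotientGroup.mk_mul_of_mem w (MonoidHom.mem_range.mpr ⟨u⁻¹, rfl⟩)]
    congr 1
    ext
    rw [val_oneAddMulRoot, Units.val_mul, hw, Units.coe_map, toAdd_ofAdd, ← hu]
    simp only [RingHom.toMonoidHom_eq_coe, MonoidHom.coe_coe, map_mul]
    ring

end AdjoinRoot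

theorem Ideal.Quotient.mk_span_pow_eq_zero {R : Type*} [CommRing R] (r : R) {k c : ℕ}
    (hkc : k ≤ c) : Ideal.Quotient.mk (Ideal.span {r ^ k}) (r ^ c) = 0 :=
  Ideal.Quotient.eq_zero_iff_mem.mpr (Ideal.mem_span_singleton.mpr (pow_dvd_pow r hkc))

section CondOrder

variable {R A : Type*} [CommRing R] [CommRing A] [Algebra R A]

noncomputable def condOrderUnitsEquiv (ϖ : R) (c : ℕ) :
    condOrderUnits R A ϖ c ≃* (condOrder R A ϖ c)ˣ :=
  (MulEquiv.subgroupCongr (Subgroup.ext fun _ => Iff.rfl :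
      condOrderUnits R A ϖ c = (condOrder R A ϖ c).toSubmonoid.units)).trans
    (Submonoid.unitsEquivUnitsType _)

theorem mem_condOrder_iff {α : A} (hb : IsQuadraticBasis R α) {ϖ : R} {c : ℕ} (x : A) :
    x ∈ condOrder R A ϖ c ↔ ϖ ^ c ∣ (hb.equiv.symm x).2 :=
  hb.mem_adjoin_smul_iff _ x

def condOrderGen (ϖ : R) (c : ℕ) (α : A) : condOrder R A ϖ c :=
  adjoinSmulGen (ϖ ^ c) α

variable [IsDomain R] {ϖ : R} {α : A}

theorem IsQuadraticBasis.condOrder (hb : IsQuadraticBasis R α) (hϖ : ϖ ≠ 0) (c : ℕ) :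
    IsQuadraticBasis R (condOrderGen ϖ c α) :=
  hb.adjoin_smul (IsRegular.of_ne_zero (pow_ne_zero c hϖ)).left

theorem IsQuadraticBasis.equiv_symm_coe_condOrder (hb : IsQuadraticBasis R α) (hϖ : ϖ ≠ 0)
    {c : ℕ} (x : _root_.condOrder R A ϖ c) :
    hb.equiv.symm x =
      (((hb.condOrder hϖ c).equiv.symm x).1, ϖ ^ c * ((hb.condOrder hϖ c).equiv.symm x).2) :=
  hb.equiv_symm_coe_adjoin_smul (IsRegular.of_ne_zero (pow_ne_zero c hϖ)).left x

noncomputable def condOrderToDual (hb : IsQuadraticBasis R α) (hϖ : ϖ ≠ 0) {c k : ℕ}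
    (hkc : k ≤ c) : condOrder R A ϖ c →+* 𝔻[R ⧸ Ideal.span {ϖ ^ k}] :=
  (hb.condOrder hϖ c).lift (adjoinSmulGen_mul_self hb.mul_self_eq (ϖ ^ c))
    ((algebraMap _ _).comp (Ideal.Quotient.mk (Ideal.span {ϖ ^ k}))) ε
    (by simp [Ideal.Quotient.mk_span_pow_eq_zero ϖ hkc, AdjoinRoot.root_X_sq_mul_self])

theorem condOrderToDual_apply (hb : IsQuadraticBasis R α) (hϖ : ϖ ≠ 0) {c k : ℕ}
    (hkc : k ≤ c) (x : condOrder R A ϖ c) :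
    condOrderToDual hb hϖ hkc x =
      algebraMap (R ⧸ Ideal.span {ϖ ^ k}) _
          (Ideal.Quotient.mk _ ((hb.condOrder hϖ c).equiv.symm x).1) +
        algebraMap (R ⧸ Ideal.span {ϖ ^ k}) _
          (Ideal.Quotient.mk _ ((hb.condOrder hϖ c).equiv.symm x).2) * ε :=
  rfl

theorem condOrderToDual_mem_range_iff (hb : IsQuadraticBasis R α) (hϖ : ϖ ≠ 0) {c k : ℕ}
    (hkc : k ≤ c) (x : condOrder R A ϖ c) :
    condOrderToDual hb hϖ hkc x ∈ Set.range (algebraMap (R ⧸ Ideal.span {ϖ ^ k}) _) ↔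
      (x : A) ∈ condOrder R A ϖ (c + k) := by
  rw [condOrderToDual_apply, AdjoinRoot.algebraMap_add_mul_root_mem_range_iff,
    Ideal.Quotient.eq_zero_iff_mem, Ideal.mem_span_singleton, mem_condOrder_iff hb,
    hb.equiv_symm_coe_condOrder hϖ, pow_add, mul_dvd_mul_iff_left (pow_ne_zero c hϖ)]

theorem units_map_condOrderToDual_surjective [IsLocalRing R] (hb : IsQuadraticBasis R α)
    (hϖ : ϖ ≠ 0) (hϖu : ¬IsUnit ϖ) {c k : ℕ} (hk : 0 < k) (hkc : k ≤ c) :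
    Function.Surjective (Units.map (condOrderToDual hb hϖ hkc).toMonoidHom) := by
  have : Nontrivial (R ⧸ Ideal.span {ϖ ^ k}) := Ideal.Quotient.nontrivial_iff.mpr fun h =>
    hϖu ((isUnit_pow_iff hk.ne').mp (Ideal.span_singleton_eq_top.mp h))
  have := IsLocalHom.of_surjective _ (Ideal.Quotient.mk_surjective (I := Ideal.span {ϖ ^ k}))
  intro w
  obtain ⟨s, t, hw⟩ := AdjoinRoot.exists_eq_algebraMap_add_mul_root w.val
  have hs := AdjoinRoot.isUnit_algebraMap_add_mul_root_iff.mp (hw ▸ w.isUnit)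
  obtain ⟨a, rfl⟩ := Ideal.Quotient.mk_surjective s
  obtain ⟨b, rfl⟩ := Ideal.Quotient.mk_surjective t
  have hx : IsUnit (algebraMap R _ a + b • condOrderGen ϖ c α) := by
    refine isUnit_algebraMap_add_smul (adjoinSmulGen_mul_self hb.mul_self_eq (ϖ ^ c))
      ((isUnit_map_iff (Ideal.Quotient.mk (Ideal.span {ϖ ^ k})) _).mp ?_)
    simpa [Ideal.Quotient.mk_span_pow_eq_zero ϖ hkc] using hs.mul hs
  refine ⟨hx.unit, Units.ext ?_⟩
  rw [Units.coe_map, IsUnit.unit_spec, hw]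
  change condOrderToDual hb hϖ hkc _ = _
  rw [condOrderToDual_apply, IsQuadraticBasis.equiv_symm_algebraMap_add_smul]

noncomputable def condOrderUnitsToDual (hb : IsQuadraticBasis R α) (hϖ : ϖ ≠ 0) {c k : ℕ}
    (hkc : k ≤ c) :
    condOrderUnits R A ϖ c →* 𝔻[R ⧸ Ideal.span {ϖ ^ k}]ˣ ⧸
      (Units.map
        (algebraMap (R ⧸ Ideal.span {ϖ ^ k}) 𝔻[R ⧸ Ideal.span {ϖ ^ k}]).toMonoidHom).range :=
  (QuotientGroup.mk' _).comp
    ((Units.map (condOrderToDual hb hϖ hkc).toMonoidHom).comp (condOrderUnitsEquiv ϖ c).toMonoidHom)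

theorem condOrderUnitsToDual_eq_one_iff (hb : IsQuadraticBasis R α) (hϖ : ϖ ≠ 0) {c k : ℕ}
    (hkc : k ≤ c) (u : condOrderUnits R A ϖ c) :
    condOrderUnitsToDual hb hϖ hkc u = 1 ↔ ((u : Aˣ) : A) ∈ condOrder R A ϖ (c + k) := by
  rw [condOrderUnitsToDual, MonoidHom.comp_apply, QuotientGroup.mk'_apply,
    QuotientGroup.eq_one_iff, AdjoinRoot.mem_range_unitsMap_iff]
  exact condOrderToDual_mem_range_iff hb hϖ hkc _

theorem ker_condOrderUnitsToDual (hb : IsQuadraticBasis R α) (hϖ : ϖ ≠ 0) {c k : ℕ}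
    (hkc : k ≤ c) :
    (condOrderUnitsToDual hb hϖ hkc).ker =
      (condOrderUnits R A ϖ (c + k)).subgroupOf (condOrderUnits R A ϖ c) := by
  ext u
  rw [Subgroup.mem_subgroupOf]
  refine ⟨fun hu => ⟨?_, ?_⟩, fun hu => ?_⟩
  · exact (condOrderUnitsToDual_eq_one_iff hb hϖ hkc u).mp hu
  · exact (condOrderUnitsToDual_eq_one_iff hb hϖ hkc u⁻¹).mp (inv_mem hu)
  · exact (condOrderUnitsToDual_eq_one_iff hb hϖ hkc u).mpr hu.1

noncomputable def condOrderUnitsQuotientEquiv [IsLocalRing R] (hb : IsQuadraticBasis R α)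
    (hϖ : ϖ ≠ 0) (hϖu : ¬IsUnit ϖ) {c k : ℕ} (hk : 0 < k) (hkc : k ≤ c) :
    condOrderUnits R A ϖ c ⧸ (condOrderUnits R A ϖ (c + k)).subgroupOf (condOrderUnits R A ϖ c) ≃*
      𝔻[R ⧸ Ideal.span {ϖ ^ k}]ˣ ⧸
        (Units.map
          (algebraMap (R ⧸ Ideal.span {ϖ ^ k}) 𝔻[R ⧸ Ideal.span {ϖ ^ k}]).toMonoidHom).range :=
  (QuotientGroup.quotientMulEquivOfEq (ker_condOrderUnitsToDual hb hϖ hkc).symm).trans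
    (QuotientGroup.quotientKerEquivOfSurjective _
      ((QuotientGroup.mk'_surjective _).comp
        ((units_map_condOrderToDual_surjective hb hϖ hϖu hk hkc).comp
          (condOrderUnitsEquiv ϖ c).surjective)))

end CondOrder

theorem condOrderUnits_consecutive_quotient (ϖ : O) (hϖ : Irreducible ϖ)
    (α : E)
    (hbasis : ∀ x : E, ∃! p : O × O, x = algebraMap O E p.1 + p.2 • α)
    (q : ℕ) (hq : Nat.card (O ⧸ Ideal.span {ϖ}) = q) :
    (∀ c k : ℕ, 0 < k → k ≤ c →
      Nonempty ((↥(condOrderUnits O E ϖ c) ⧸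
          ((condOrderUnits O E ϖ (c + k)).subgroupOf (condOrderUnits O E ϖ c))) ≃*
        ((AdjoinRoot (Polynomial.X ^ 2 : Polynomial (O ⧸ Ideal.span {ϖ ^ k})))ˣ ⧸
          (Units.map (algebraMap (O ⧸ Ideal.span {ϖ ^ k})
            (AdjoinRoot (Polynomial.X ^ 2 :
              Polynomial (O ⧸ Ideal.span {ϖ ^ k})))).toMonoidHom).range))) ∧
    (∀ c : ℕ, 1 ≤ c →
      Nat.card (↥(condOrderUnits O E ϖ c) ⧸
        ((condOrderUnits O E ϖ (c + 1)).subgroupOf (condOrderUnits O E ϖ c))) = q) := by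
  refine ⟨fun c k hk hkc =>
    ⟨condOrderUnitsQuotientEquiv hbasis hϖ.ne_zero hϖ.not_isUnit hk hkc⟩, fun c hc => ?_⟩
  rw [Nat.card_congr
      (condOrderUnitsQuotientEquiv hbasis hϖ.ne_zero hϖ.not_isUnit one_pos hc).toEquiv,
    ← Nat.card_congr AdjoinRoot.unitsQuotientEquiv.toEquiv, pow_one, ← hq]
  exact Nat.card_congr Multiplicative.toAdd
end

section
/- Let $F$ be a non-archimedean local field, $G = GL_{n+1}(F) \times GL_n(F)$, $H = \Delta(GL_n(F))$ embedded diagonally (via the upper-left block embedding into $GL_{n+1}$), and $K = GL_{n+1}(\mathcal{O}) \times GL_n(\mathcal{O})$. For $\star \in \{1,2\}$ let $g_\star = (A_\star, B_\star)$ where $A_\star$ has diagonal $(\varpi^{a_{1,\star}},\dots,\varpi^{a_{n,\star}}, \varpi^{c_\star})$ with last column entries $1$ above $\varpi^{c_\star}$, and $B_\star = \mathrm{diag}(\varpi^{b_{1,\star}},\dots,\varpi^{b_{n,\star}})$, with $(a_{k,\star})_k$ non-increasing and $(b_{k,\star})_k$ non-decreasing. If $H g_1 K = H g_2 K$ then $c_1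 = c_2$ and $a_{k,1} - b_{k,1} = a_{k,2} - b_{k,2}$ for all $1 \leq k \leq n$. -/
/-- The upper-left block embedding `GL_n → GL_{n+1}` at the level of matrices. -/
def glIota {F : Type*} [Field F] (n : ℕ) (m : Matrix (Fin n) (Fin n) F) :
    Matrix (Fin (n + 1)) (Fin (n + 1)) F :=
  fun i j =>
    if hi : (i : ℕ) < n then
      (if hj : (j : ℕ) < n then m ⟨i, hi⟩ ⟨j, hj⟩ else 0)
    else (if (j : ℕ) = n then 1 else 0)

/-- The matrix with diagonal `(ϖ^{a_1},…,ϖ^{a_n},ϖ^c)`, last column entries `1` above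
`ϖ^c`, and zeros elsewhere. -/
noncomputable def repMatrixC {F : Type*} [Field F] (n : ℕ) (ϖ : F) (a : Fin n → ℤ)
    (c : ℤ) : Matrix (Fin (n + 1)) (Fin (n + 1)) F :=
  fun i j =>
    if hi : (i : ℕ) < n then
      (if i = j then ϖ ^ (a ⟨i, hi⟩) else if (j : ℕ) = n then 1 else 0)
    else (if (j : ℕ) = n then ϖ ^ c else 0)

/-!
The last row of `glIota h * A₁ * k₁ = A₂` shows that `k₁` is block upper triangular with
corner entry `ϖ^{c₂ - c₁}`; as `k₁` is invertible over `O` this corner is a unit, so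
`c₁ = c₂`, and the upper-left block `P` of `k₁` lies in `GL_n(O)` with
`h ϖ^{a₁} P = ϖ^{a₂}`. Eliminating `h` with `h ϖ^{b₁} k₂ = ϖ^{b₂}` gives
`ϖ^{a₁ - b₁} P = k₂ ϖ^{a₂ - b₂}` with both exponent vectors non-increasing, and the
uniqueness of Cartan representatives for `GL_n` forces `a₁ - b₁ = a₂ - b₂`.
-/

open Matrix

theorem Fin.exists_le_le_perm_apply {n : ℕ} (σ : Equiv.Perm (Fin n)) (r : Fin n) :
    ∃ j ≤ r, r ≤ σ j := by
  by_contra! hc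
  have hmaps : Set.MapsTo σ (Finset.Iic r) (Finset.Iio r) := fun j hj => by
    simpa using hc j (by simpa using hj)
  have := Finset.card_le_card_of_injOn σ hmaps σ.injective.injOn
  rw [Fin.card_Iic, Fin.card_Iio] at this
  omega

theorem Matrix.dvd_det_of_dvd_lowerLeft {R : Type*} [CommRing R] {n : ℕ}
    (P : Matrix (Fin n) (Fin n) R) {x : R} (r : Fin n)
    (h : ∀ i j, r ≤ i → j ≤ r → x ∣ P i j) : x ∣ P.det := by
  rw [det_apply]
  refine Finset.dvd_sum fun σ _ => ?_
  obtain ⟨j, hjr, hrσj⟩ := Fin.exists_le_le_perm_apply σ r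
  rw [Units.smul_def]
  exact dvd_smul_of_dvd _
    ((h _ _ hrσj hjr).trans (Finset.dvd_prod_of_mem _ (Finset.mem_univ j)))

theorem Matrix.det_eq_mul_det_submatrix_castSucc {R : Type*} [CommRing R] {n : ℕ}
    (M : Matrix (Fin (n + 1)) (Fin (n + 1)) R)
    (hM : ∀ j : Fin n, M (Fin.last n) j.castSucc = 0) :
    M.det = M (Fin.last n) (Fin.last n) * (M.submatrix Fin.castSucc Fin.castSucc).det := by
  rw [det_succ_row M (Fin.last n), Fin.sum_univ_castSucc]
  simp [hM, Fin.succAbove_last]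

section ValuationSubring

variable {F : Type*} [Field F] {O : ValuationSubring F} {ϖ : O}

theorem ValuationSubring.dvd_of_coe_eq_mul_zpow {x y : O} {m : ℤ} (hm : 0 < m)
    (h : (x : F) = y * (ϖ : F) ^ m) : ϖ ∣ x := by
  obtain ⟨k, rfl⟩ := Int.eq_ofNat_of_zero_le hm.le
  have hx : x = y * ϖ ^ k := Subtype.ext (by simpa using h)
  exact hx ▸ dvd_mul_of_dvd_right (dvd_pow_self ϖ (by omega)) y

theorem ValuationSubring.eq_of_zpow_mul_isUnit_eq_zpow (hϖ : Irreducible ϖ) {u : O}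
    (hu : IsUnit u) {c d : ℤ} (h : (ϖ : F) ^ c * u = (ϖ : F) ^ d) : c = d := by
  have hϖ0 : (ϖ : F) ≠ 0 := by simpa using hϖ.ne_zero
  rcases lt_trichotomy c d with hcd | rfl | hdc
  · refine absurd (isUnit_of_dvd_unit (dvd_of_coe_eq_mul_zpow (sub_pos.mpr hcd)
      (y := 1) ?_) hu) hϖ.not_isUnit
    rw [OneMemClass.coe_one, one_mul, zpow_sub₀ hϖ0, ← h]
    field_simp
  · rfl
  · refine absurd (isUnit_of_dvd_unit (dvd_of_coe_eq_mul_zpow (sub_pos.mpr hdc)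
      (x := 1) (y := u) ?_) isUnit_one) hϖ.not_isUnit
    have hu0 : (u : F) ≠ 0 := by simpa using hu.ne_zero
    rw [OneMemClass.coe_one, zpow_sub₀ hϖ0, ← h]
    field_simp

end ValuationSubring

section Cartan

variable {F : Type*} [Field F] {O : ValuationSubring F} {ϖ : O} {n : ℕ}

theorem le_of_diagonal_zpow_mul_eq_mul_diagonal_zpow (hϖ : Irreducible ϖ) {d e : Fin n → ℤ}
    (hd : Antitone d) (he : Antitone e) {P K : Matrix (Fin n) (Fin n) O} (hP : IsUnit P)
    (h : diagonal (fun i => (ϖ : F) ^ d i) * P.map O.subtype =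
      K.map O.subtype * diagonal (fun i => (ϖ : F) ^ e i)) (r : Fin n) : e r ≤ d r := by
  by_contra! hlt
  have hϖ0 : (ϖ : F) ≠ 0 := by simpa using hϖ.ne_zero
  -- `P i j = K i j ϖ^{e j - d i}`, and `e j - d i ≥ e r - d r > 0` on the block `i ≥ r ≥ j`
  refine hϖ.not_isUnit (isUnit_of_dvd_unit (P.dvd_det_of_dvd_lowerLeft r fun i j hri hjr => ?_)
    ((isUnit_iff_isUnit_det P).mp hP))
  refine ValuationSubring.dvd_of_coe_eq_mul_zpow (y := K i j) (m := e j - d i)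
    (by linarith [hd hri, he hjr]) ?_
  have hij := congrFun (congrFun h i) j
  simp only [diagonal_mul, mul_diagonal, map_apply] at hij
  rw [zpow_sub₀ hϖ0, ← mul_div_assoc, eq_div_iff (zpow_ne_zero _ hϖ0), mul_comm]
  exact hij

theorem eq_of_diagonal_zpow_mul_eq_mul_diagonal_zpow (hϖ : Irreducible ϖ) {d e : Fin n → ℤ}
    (hd : Antitone d) (he : Antitone e) {P K : Matrix (Fin n) (Fin n) O} (hP : IsUnit P)
    (hK : IsUnit K)
    (h : diagonal (fun i => (ϖ : F) ^ d i) * P.map O.subtype =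
      K.map O.subtype * diagonal (fun i => (ϖ : F) ^ e i)) : d = e := by
  funext r
  refine le_antisymm ?_ (le_of_diagonal_zpow_mul_eq_mul_diagonal_zpow hϖ hd he hP h r)
  refine le_of_diagonal_zpow_mul_eq_mul_diagonal_zpow hϖ he hd (K := Pᵀ)
    ((isUnit_transpose K).mpr hK) ?_ r
  simpa [transpose_mul, transpose_map] using (congrArg transpose h).symm

end Cartan

theorem diagonal_zpow_sub_mul_eq_mul_diagonal_zpow_sub {F ι : Type*} [Field F] [Fintype ι]
    [DecidableEq ι] {ϖ : F} (hϖ : ϖ ≠ 0) {a₁ a₂ b₁ b₂ : ι → ℤ} {h P K : Matrix ι ι F}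
    (hh : IsUnit h)
    (hA : h * diagonal (fun i => ϖ ^ a₁ i) * P = diagonal (fun i => ϖ ^ a₂ i))
    (hB : h * diagonal (fun i => ϖ ^ b₁ i) * K = diagonal (fun i => ϖ ^ b₂ i)) :
    diagonal (fun i => ϖ ^ (a₁ i - b₁ i)) * P = K * diagonal (fun i => ϖ ^ (a₂ i - b₂ i)) := by
  have hsplit (a b : ι → ℤ) : diagonal (fun i => ϖ ^ b i) *
      diagonal (fun i => ϖ ^ (a i - b i)) = diagonal (fun i => ϖ ^ a i) := by
    rw [diagonal_mul_diagonal]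
    congr 1
    funext i
    rw [← zpow_add₀ hϖ, add_sub_cancel]
  have hu : IsUnit (h * diagonal fun i => ϖ ^ b₁ i) :=
    hh.mul (isUnit_diagonal.mpr (Pi.isUnit_iff.mpr fun i => (zpow_ne_zero _ hϖ).isUnit))
  refine hu.mul_left_cancel ?_
  calc h * diagonal (fun i => ϖ ^ b₁ i) * (diagonal (fun i => ϖ ^ (a₁ i - b₁ i)) * P)
      = h * diagonal (fun i => ϖ ^ a₁ i) * P := by
        rw [← hsplit a₁ b₁]
        simp only [Matrix.mul_assoc]
    _ = diagonal (fun i => ϖ ^ b₂ i) * diagonal (fun i => ϖ ^ (a₂ i - b₂ i)) := by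
        rw [hA, hsplit]
    _ = h * diagonal (fun i => ϖ ^ b₁ i) * (K * diagonal (fun i => ϖ ^ (a₂ i - b₂ i))) := by
        rw [← hB, Matrix.mul_assoc]

section Block

variable {F : Type*} [Field F] {n : ℕ}

@[simp]
theorem glIota_castSucc_castSucc (m : Matrix (Fin n) (Fin n) F) (i j : Fin n) :
    glIota n m i.castSucc j.castSucc = m i j := by
  simp [glIota]

@[simp]
theorem glIota_castSucc_last (m : Matrix (Fin n) (Fin n) F) (i : Fin n) :
    glIota n m i.castSucc (Fin.last n) = 0 := by
  simp [glIota]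

@[simp]
theorem glIota_last_castSucc (m : Matrix (Fin n) (Fin n) F) (j : Fin n) :
    glIota n m (Fin.last n) j.castSucc = 0 := by
  simp [glIota, j.is_lt.ne]

@[simp]
theorem glIota_last_last (m : Matrix (Fin n) (Fin n) F) :
    glIota n m (Fin.last n) (Fin.last n) = 1 := by
  simp [glIota]

@[simp]
theorem repMatrixC_castSucc_castSucc (ϖ : F) (a : Fin n → ℤ) (c : ℤ) (i j : Fin n) :
    repMatrixC n ϖ a c i.castSucc j.castSucc = if i = j then ϖ ^ a i else 0 := by
  simp [repMatrixC, Fin.castSucc_inj, j.is_lt.ne]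

@[simp]
theorem repMatrixC_last_castSucc (ϖ : F) (a : Fin n → ℤ) (c : ℤ) (j : Fin n) :
    repMatrixC n ϖ a c (Fin.last n) j.castSucc = 0 := by
  simp [repMatrixC, j.is_lt.ne]

@[simp]
theorem repMatrixC_last_last (ϖ : F) (a : Fin n → ℤ) (c : ℤ) :
    repMatrixC n ϖ a c (Fin.last n) (Fin.last n) = ϖ ^ c := by
  simp [repMatrixC]

theorem glIota_mul_repMatrixC_mul_eq {m : Matrix (Fin n) (Fin n) F}
    {k : Matrix (Fin (n + 1)) (Fin (n + 1)) F} {ϖ : F} (hϖ : ϖ ≠ 0) {a a' : Fin n → ℤ}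
    {c c' : ℤ} (h : glIota n m * repMatrixC n ϖ a c * k = repMatrixC n ϖ a' c') :
    (∀ j : Fin n, k (Fin.last n) j.castSucc = 0) ∧
      ϖ ^ c * k (Fin.last n) (Fin.last n) = ϖ ^ c' ∧
      m * diagonal (fun i => ϖ ^ a i) * k.submatrix Fin.castSucc Fin.castSucc =
        diagonal (fun i => ϖ ^ a' i) := by
  have hrow (j : Fin (n + 1)) :
      ϖ ^ c * k (Fin.last n) j = repMatrixC n ϖ a' c' (Fin.last n) j := by
    rw [← h, mul_apply, Fin.sum_univ_castSucc]
    simp [mul_apply, Fin.sum_univ_castSucc]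
  have hzero (j : Fin n) : k (Fin.last n) j.castSucc = 0 := by
    simpa [zpow_ne_zero _ hϖ] using hrow j.castSucc
  refine ⟨hzero, by simpa using hrow (Fin.last n), ?_⟩
  ext i j
  have hij := congrFun (congrFun h i.castSucc) j.castSucc
  simpa [mul_apply, Fin.sum_univ_castSucc, hzero, diagonal_apply] using hij

end Block

theorem doset_representative_unique_general
    (n : ℕ) (F : Type*) [Field F] (O : ValuationSubring F)
    (ϖ : O) (hϖ : Irreducible ϖ)
    (a₁ a₂ b₁ b₂ : Fin n → ℤ) (c₁ c₂ : ℤ)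
    (ha₁ : ∀ k l : Fin n, k ≤ l → a₁ l ≤ a₁ k) (ha₂ : ∀ k l : Fin n, k ≤ l → a₂ l ≤ a₂ k)
    (hb₁ : ∀ k l : Fin n, k ≤ l → b₁ k ≤ b₁ l) (hb₂ : ∀ k l : Fin n, k ≤ l → b₂ k ≤ b₂ l)
    (hcoset : ∃ h : Matrix (Fin n) (Fin n) F, IsUnit h ∧
      ∃ (k₁ : Matrix (Fin (n + 1)) (Fin (n + 1)) O) (k₂ : Matrix (Fin n) (Fin n) O),
        IsUnit k₁ ∧ IsUnit k₂ ∧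
        glIota n h * repMatrixC n (ϖ : F) a₁ c₁ * (k₁.map O.subtype) =
          repMatrixC n (ϖ : F) a₂ c₂ ∧
        h * Matrix.diagonal (fun i => (ϖ : F) ^ (b₁ i)) * (k₂.map O.subtype) =
          Matrix.diagonal (fun i => (ϖ : F) ^ (b₂ i))) :
    c₁ = c₂ ∧ ∀ k : Fin n, a₁ k - b₁ k = a₂ k - b₂ k := by
  obtain ⟨h, hh, k₁, k₂, hk₁, hk₂, hA, hB⟩ := hcoset
  have hϖ0 : (ϖ : F) ≠ 0 := by simpa using hϖ.ne_zero
  obtain ⟨hzero, hc, hP⟩ := glIota_mul_repMatrixC_mul_eq hϖ0 hA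
  rw [submatrix_map] at hP
  set P := k₁.submatrix Fin.castSucc Fin.castSucc
  have hdet : IsUnit (k₁ (Fin.last n) (Fin.last n) * P.det) := by
    rw [← det_eq_mul_det_submatrix_castSucc k₁ fun j => by simpa using hzero j]
    exact (isUnit_iff_isUnit_det k₁).mp hk₁
  have hd₁ : Antitone fun k => a₁ k - b₁ k := fun k l hkl => sub_le_sub (ha₁ k l hkl) (hb₁ k l hkl)
  have hd₂ : Antitone fun k => a₂ k - b₂ k := fun k l hkl => sub_le_sub (ha₂ k l hkl) (hb₂ k l hkl)
  refine ⟨ValuationSubring.eq_of_zpow_mul_isUnit_eq_zpow hϖ (isUnit_of_mul_isUnit_left hdet) hc,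
    congrFun (eq_of_diagonal_zpow_mul_eq_mul_diagonal_zpow hϖ hd₁ hd₂
      ((isUnit_iff_isUnit_det P).mpr (isUnit_of_mul_isUnit_right hdet)) hk₂
      (diagonal_zpow_sub_mul_eq_mul_diagonal_zpow_sub hϖ0 hh hP hB))⟩

/-- uniqueness of the double coset parametrization.  With
`G = GL_{n+1}(F) × GL_n(F)`, `H = Δ(GL_n(F))` (via the upper-left block embedding) and
`K = GL_{n+1}(O) × GL_n(O)`, if the elements `g_⋆ = (A_⋆, B_⋆)` (`⋆ = 1,2`) as described
— `(a_{k,⋆})_k` non-increasing, `(b_{k,⋆})_k` non-decreasing — satisfy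
`H g₁ K = H g₂ K`, then `c₁ = c₂` and `a_{k,1} - b_{k,1} = a_{k,2} - b_{k,2}` for all `k`. -/
theorem doset_representative_unique
    (n : ℕ) (F : Type*) [Field F] (O : ValuationSubring F)
    [IsDiscreteValuationRing O] (ϖ : O) (hϖ : Irreducible ϖ)
    (a₁ a₂ b₁ b₂ : Fin n → ℤ) (c₁ c₂ : ℤ)
    (ha₁ : ∀ k l : Fin n, k ≤ l → a₁ l ≤ a₁ k) (ha₂ : ∀ k l : Fin n, k ≤ l → a₂ l ≤ a₂ k)
    (hb₁ : ∀ k l : Fin n, k ≤ l → b₁ k ≤ b₁ l) (hb₂ : ∀ k l : Fin n, k ≤ l → b₂ k ≤ b₂ l)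
    (hcoset : ∃ h : Matrix (Fin n) (Fin n) F, IsUnit h ∧
      ∃ (k₁ : Matrix (Fin (n + 1)) (Fin (n + 1)) O) (k₂ : Matrix (Fin n) (Fin n) O),
        IsUnit k₁ ∧ IsUnit k₂ ∧
        glIota n h * repMatrixC n (ϖ : F) a₁ c₁ * (k₁.map O.subtype) =
          repMatrixC n (ϖ : F) a₂ c₂ ∧
        h * Matrix.diagonal (fun i => (ϖ : F) ^ (b₁ i)) * (k₂.map O.subtype) =
          Matrix.diagonal (fun i => (ϖ : F) ^ (b₂ i))) :
    c₁ = c₂ ∧ ∀ k : Fin n, a₁ k - b₁ k = a₂ k - b₂ k :=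
  doset_representative_unique_general n F O ϖ hϖ a₁ a₂ b₁ b₂ c₁ c₂ ha₁ ha₂ hb₁ hb₂ hcoset
end

section
/- (Local congruence relation, case n = 1.) Let $F$ be a non-archimedean local field with ring of integers $\mathcal{O}$, residue cardinality $q$, uniformizer $\varpi$. Let $G = GL_2(F) \times F^\times$, $K = GL_2(\mathcal{O}) \times \mathcal{O}^\times$, $H = \{(\iota(t), t): t \in F^\times\}$ with $\iota(t) = \mathrm{diag}(t,1)$, and $H_0 = \{(\iota(t),t) : t \in \mathcal{O}^\times\}$. Let $\mathrm{Frob} = (\mathrm{diag}(\varpi,1), \varpi)$ act on $\mathbb{Z}[H_0\backslash G/K]$ by left multiplication, and let $T_{1,V}, T_{2,V}, T_{1,W}$ act as the Hecke operators of the respective double cosets. Then $H_w(\mathrm{Frob})\cdot [H_0 \cdot 1 \cdot K] \equiv 0 \pmod{(q-1)}$ in $\mathbb{Z}[q^{-1}][H_0\backslash G/K]$, where $H_w(z) = z^2 - (T_{1,V}\otimes T_{1,W}) z + q(T_{2,V}\otimes T_{1,W}^2)$. -/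
noncomputable section

variable {F : Type*} [Field F]

/-- The diagonal matrix `diag(x, y)` as an element of `GL₂(F)`. -/
def glD (x y : F) (hx : x ≠ 0) (hy : y ≠ 0) : GL (Fin 2) F :=
  Matrix.GeneralLinearGroup.mkOfDetNeZero !![x, 0; 0, y] (by
    rw [Matrix.det_fin_two_of]; simpa using mul_ne_zero hx hy)

/-- The upper-triangular matrix `[[x, a], [0, 1]]` as an element of `GL₂(F)`. -/
def glU (x a : F) (hx : x ≠ 0) : GL (Fin 2) F :=
  Matrix.GeneralLinearGroup.mkOfDetNeZero !![x, a; 0, 1] (by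
    rw [Matrix.det_fin_two_of]; simpa using hx)

/-- `H = {(ι(t), t) : t ∈ Fˣ}` with `ι(t) = diag(t,1)`, restricted to
`H₀ = {(ι(t), t) : t ∈ 𝒪ˣ}`, as a subset of `G = GL₂(F) × Fˣ`. -/
def H0set (O : ValuationSubring F) : Set (GL (Fin 2) F × Fˣ) :=
  {p | ∃ t : Fˣ, (t : F) ∈ O ∧ ((t⁻¹ : Fˣ) : F) ∈ O ∧
    p = (glU (t : F) 0 t.ne_zero, t)}

/-- `K = GL₂(𝒪) × 𝒪ˣ` as a subset of `G = GL₂(F) × Fˣ`. -/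
def Kset (O : ValuationSubring F) : Set (GL (Fin 2) F × Fˣ) :=
  {p | (∀ i j, (p.1 : Matrix (Fin 2) (Fin 2) F) i j ∈ O) ∧
    (∀ i j, ((p.1⁻¹ : GL (Fin 2) F) : Matrix (Fin 2) (Fin 2) F) i j ∈ O) ∧
    ((p.2 : F) ∈ O) ∧ (((p.2⁻¹ : Fˣ) : F) ∈ O)}

/-! Multiplying out, `Frob · ([[ϖ, a], [0, 1]], ϖ) = ([[ϖ², ϖa], [0, 1]], ϖ²)`. Right multiplication by
the unipotent elements `[[1, b], [0, 1]]` of `K` shows that its class in `H₀\G/K` depends on `a` only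
modulo `ϖ`, and conjugation by `(diag(t, 1), t) ∈ H₀ ∩ K` replaces `a` by `t a`. So among the `q`
residue representatives, the one in `ϖ𝒪` gives `[Frob²]` and the other `q - 1` all give the class of
`a = 1`, while `Frob · (diag(1, ϖ), ϖ) = (diag(ϖ, ϖ), ϖ²)`. The whole expression is therefore
`(q - 1) ([diag(ϖ, ϖ), ϖ²] - [Frob · ([[ϖ, 1], [0, 1]], ϖ)])`. -/

open Finset IsLocalRing

lemma card_eq_natCard_quotient_of_existsUnique {R : Type*} [CommRing R] {I : Ideal R}
    {S : Finset R} (hS : ∀ z, ∃! s, s ∈ S ∧ s - z ∈ I) : #S = Nat.card (R ⧸ I) := by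
  rw [← Nat.card_eq_finsetCard]
  refine Nat.card_eq_of_bijective (fun s : S => Ideal.Quotient.mk I s) ⟨?_, ?_⟩
  · rintro ⟨a, ha⟩ ⟨b, hb⟩ hab
    obtain ⟨s, -, hs⟩ := hS b
    exact Subtype.ext <| (hs a ⟨ha, Ideal.Quotient.eq.mp hab⟩).trans (hs b ⟨hb, by simp⟩).symm
  · intro z
    obtain ⟨z, rfl⟩ := Ideal.Quotient.mk_surjective z
    obtain ⟨s, ⟨hs, hsz⟩, -⟩ := hS z
    exact ⟨⟨s, hs⟩, Ideal.Quotient.eq.mpr hsz⟩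

lemma IsLocalRing.sum_eq_of_existsUnique {R M : Type*} [CommRing R] [IsLocalRing R]
    [AddCommGroup M] {S : Finset R} (hS : ∀ z, ∃! s, s ∈ S ∧ s - z ∈ maximalIdeal R)
    (f : R → M) (h₀ : ∀ a ∈ maximalIdeal R, f a = f 0) (h₁ : ∀ a, IsUnit a → f a = f 1) :
    ∑ a ∈ S, f a = f 0 + ((#S : ℤ) - 1) • f 1 := by
  classical
  obtain ⟨s₀, ⟨hs₀, hs₀m⟩, huniq⟩ := hS 0
  rw [sub_zero] at hs₀m
  have hunit : ∀ a ∈ S.erase s₀, f a = f 1 := by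
    intro a ha
    obtain ⟨hne, haS⟩ := mem_erase.mp ha
    refine h₁ a (not_not.mp fun hu => hne (huniq a ⟨haS, ?_⟩))
    rwa [sub_zero, mem_maximalIdeal]
  rw [← add_sum_erase S f hs₀, h₀ s₀ hs₀m, sum_congr rfl hunit, sum_const,
    card_erase_of_mem hs₀, ← natCast_zsmul, Nat.cast_sub (card_pos.mpr ⟨s₀, hs₀⟩), Nat.cast_one]

@[simp] lemma glU_coe (x a : F) (hx : x ≠ 0) :
    ((glU x a hx : GL (Fin 2) F) : Matrix (Fin 2) (Fin 2) F) = !![x, a; 0, 1] := rfl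

@[simp] lemma glD_coe (x y : F) (hx : x ≠ 0) (hy : y ≠ 0) :
    ((glD x y hx hy : GL (Fin 2) F) : Matrix (Fin 2) (Fin 2) F) = !![x, 0; 0, y] := rfl

lemma glU_mul (x a y b : F) (hx : x ≠ 0) (hy : y ≠ 0) :
    glU x a hx * glU y b hy = glU (x * y) (x * b + a) (mul_ne_zero hx hy) := by
  ext i j
  fin_cases i <;> fin_cases j <;> simp

lemma glU_one : glU (1 : F) 0 one_ne_zero = 1 := by
  ext i j
  fin_cases i <;> fin_cases j <;> simp

lemma glU_congr {x a x' a' : F} {hx : x ≠ 0} {hx' : x' ≠ 0} (h₁ : x = x') (h₂ : a = a') :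
    glU x a hx = glU x' a' hx' := by
  subst h₁ h₂; rfl

lemma glU_zero_mul (x y b : F) (hx : x ≠ 0) (hy : y ≠ 0) :
    glU x 0 hx * glU y b hy = glU (x * y) (x * b) (mul_ne_zero hx hy) :=
  (glU_mul x 0 y b hx hy).trans (glU_congr rfl (add_zero _))

lemma glU_mul_glD (x y : F) (hx : x ≠ 0) (hy : y ≠ 0) :
    glU x 0 hx * glD 1 y one_ne_zero hy = glD x y hx hy := by
  ext i j
  fin_cases i <;> fin_cases j <;> simp

lemma glU_one_inv (b : F) : (glU 1 b one_ne_zero)⁻¹ = glU 1 (-b) one_ne_zero := by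
  refine inv_eq_of_mul_eq_one_right ?_
  rw [glU_mul, ← glU_one]
  congr 1 <;> ring

lemma glU_mem_matrix (R : Subring F) {x a : F} (hx : x ≠ 0) (hxR : x ∈ R) (haR : a ∈ R) :
    ((glU x a hx : GL (Fin 2) F) : Matrix (Fin 2) (Fin 2) F) ∈ R.matrix := by
  intro i j
  fin_cases i <;> fin_cases j
  exacts [hxR, haR, R.zero_mem, R.one_mem]

variable (F) in
def iotaH : Fˣ →* GL (Fin 2) F × Fˣ where
  toFun t := (glU t 0 t.ne_zero, t)
  map_one' := Prod.ext glU_one rfl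
  map_mul' s t := Prod.ext (by dsimp only; rw [Prod.fst_mul, glU_mul]; congr 1; simp) rfl

/- `H0group O` and `Kgroup O` are `copy`s so that their carriers are definitionally `H0set O` and
`Kset O`: the quotient `DoubleCoset.Quotient (H0set O) (Kset O)` of the statement is then the
double coset space of these subgroups. -/
def H0group (O : ValuationSubring F) : Subgroup (GL (Fin 2) F × Fˣ) :=
  (O.toSubring.toSubmonoid.units.map (iotaH F)).copy (H0set O) <| Set.ext fun _ =>
    ⟨fun ⟨t, ht, ht', h⟩ => ⟨t, ⟨ht, ht'⟩, h.symm⟩, fun ⟨t, ⟨ht, ht'⟩, h⟩ => ⟨t, ht, ht', h.symm⟩⟩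

def Kgroup (O : ValuationSubring F) : Subgroup (GL (Fin 2) F × Fˣ) :=
  ((O.toSubring.matrix : Subring (Matrix (Fin 2) (Fin 2) F)).toSubmonoid.units.prod
    O.toSubring.toSubmonoid.units).copy (Kset O) (Set.ext fun _ => and_assoc.symm)

section DoubleCosets

variable (O : ValuationSubring F)

lemma iotaH_mem_H0group {t : Fˣ} (ht : t ∈ O.toSubring.toSubmonoid.units) :
    iotaH F t ∈ H0group O :=
  ⟨t, ht.1, ht.2, rfl⟩

lemma H0group_le_Kgroup : H0group O ≤ Kgroup O := by
  rintro _ ⟨t, ht, ht', rfl⟩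
  have hinv : (glU (t : F) 0 t.ne_zero)⁻¹ = glU ((t⁻¹ : Fˣ) : F) 0 t⁻¹.ne_zero :=
    (congrArg Prod.fst (map_inv (iotaH F) t)).symm
  refine ⟨glU_mem_matrix O.toSubring t.ne_zero ht O.zero_mem, ?_, ht, ht'⟩
  show (((glU (t : F) 0 t.ne_zero)⁻¹ : GL (Fin 2) F) : Matrix (Fin 2) (Fin 2) F) ∈ O.toSubring.matrix
  rw [hinv]
  exact glU_mem_matrix O.toSubring t⁻¹.ne_zero ht' O.zero_mem

lemma glU_one_mem_Kgroup {b : F} (hb : b ∈ O) : (glU 1 b one_ne_zero, 1) ∈ Kgroup O := by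
  refine ⟨glU_mem_matrix O.toSubring one_ne_zero O.one_mem hb, ?_, O.one_mem, by simp [O.one_mem]⟩
  show (((glU 1 b one_ne_zero)⁻¹ : GL (Fin 2) F) : Matrix (Fin 2) (Fin 2) F) ∈ O.toSubring.matrix
  rw [glU_one_inv]
  exact glU_mem_matrix O.toSubring one_ne_zero O.one_mem (O.neg_mem _ hb)

lemma mk_mul_mul_eq_mk {g : GL (Fin 2) F × Fˣ} {h k : GL (Fin 2) F × Fˣ} (hh : h ∈ H0group O)
    (hk : k ∈ Kgroup O) :
    (Quotient.mk'' (h * g * k) : DoubleCoset.Quotient (H0set O) (Kset O)) = Quotient.mk'' g :=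
  ((DoubleCoset.eq (H0group O) (Kgroup O) _ _).mpr ⟨h, hh, k, hk, rfl⟩).symm

lemma mk_glU_eq_of_mem {x a a' : F} (hx : x ≠ 0) (v : Fˣ) (h : x⁻¹ * (a' - a) ∈ O) :
    (Quotient.mk'' (glU x a' hx, v) : DoubleCoset.Quotient (H0set O) (Kset O)) =
      Quotient.mk'' (glU x a hx, v) := by
  have hmul : (glU x a' hx, v) = 1 * (glU x a hx, v) * (glU 1 (x⁻¹ * (a' - a)) one_ne_zero, 1) := by
    rw [one_mul]
    refine Prod.ext ?_ (mul_one v).symm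
    dsimp only
    rw [Prod.fst_mul, glU_mul]
    exact glU_congr (mul_one x).symm (by field_simp; ring)
  rw [hmul]
  exact mk_mul_mul_eq_mk O (H0group O).one_mem (glU_one_mem_Kgroup O h)

lemma iotaH_mul_glU_mul_inv (t : Fˣ) {x : F} (a : F) (hx : x ≠ 0) (v : Fˣ) :
    iotaH F t * (glU x a hx, v) * (iotaH F t)⁻¹ = (glU x (t * a) hx, v) := by
  rw [← map_inv]
  refine Prod.ext ?_ (mul_inv_cancel_comm _ _)
  simp only [iotaH, MonoidHom.coe_mk, OneHom.coe_mk, Prod.fst_mul, glU_mul, Units.val_inv_eq_inv_val]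
  exact glU_congr (by field_simp) (by simp)

lemma mk_glU_eq_of_unit {x a a' : F} (hx : x ≠ 0) (v : Fˣ) {t : Fˣ}
    (ht : t ∈ O.toSubring.toSubmonoid.units) (h : a' = t * a) :
    (Quotient.mk'' (glU x a' hx, v) : DoubleCoset.Quotient (H0set O) (Kset O)) =
      Quotient.mk'' (glU x a hx, v) := by
  rw [h, ← iotaH_mul_glU_mul_inv]
  exact mk_mul_mul_eq_mk O (iotaH_mem_H0group O ht)
    (H0group_le_Kgroup O (inv_mem (iotaH_mem_H0group O ht)))

lemma mk_glU_mul_glU_eq_of_mem {x a : F} (hx : x ≠ 0) (v : Fˣ) (ha : x⁻¹ * a ∈ O) :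
    (Quotient.mk'' ((glU x 0 hx, v) * (glU x a hx, v)) :
      DoubleCoset.Quotient (H0set O) (Kset O)) = Quotient.mk'' ((glU x 0 hx, v) * (glU x 0 hx, v)) := by
  simp only [Prod.mk_mul_mk, glU_zero_mul]
  refine mk_glU_eq_of_mem O _ _ ?_
  convert ha using 1
  field_simp
  ring

lemma mk_glU_mul_glU_eq_of_unit {x : F} (hx : x ≠ 0) (v : Fˣ) {t : Fˣ}
    (ht : t ∈ O.toSubring.toSubmonoid.units) :
    (Quotient.mk'' ((glU x 0 hx, v) * (glU x t hx, v)) :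
      DoubleCoset.Quotient (H0set O) (Kset O)) = Quotient.mk'' ((glU x 0 hx, v) * (glU x 1 hx, v)) := by
  simp only [Prod.mk_mul_mk, glU_zero_mul]
  exact mk_glU_eq_of_unit O _ _ ht (by ring)

lemma inv_mul_mem_of_mem_span_singleton {ϖ a : O} (hϖ : (ϖ : F) ≠ 0) (ha : a ∈ Ideal.span {ϖ}) :
    (ϖ : F)⁻¹ * a ∈ O := by
  obtain ⟨m, rfl⟩ := Ideal.mem_span_singleton.mp ha
  push_cast
  rw [inv_mul_cancel_left₀ hϖ]
  exact m.2

end DoubleCosets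

/-- The Hecke operators are expanded via explicit coset representatives:
`K·diag(ϖ,1)·K = ⊔_{a ∈ S} [[ϖ,a],[0,1]]·K ⊔ [[1,0],[0,ϖ]]·K` (with `S` a set
of representatives of the residue field, of cardinality `q`), and
`T_{2,V} ⊗ T_{1,W}²` corresponds to the single coset of `(diag(ϖ,ϖ), ϖ²)`. -/
theorem local_congruence_relation_GL2
    (O : ValuationSubring F) [IsDiscreteValuationRing O]
    (ϖO : O) (hϖ : Irreducible ϖO) (hϖ0 : (ϖO : F) ≠ 0)
    (q : ℕ) (hq : Nat.card (O ⧸ Ideal.span {ϖO}) = q)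
    (S : Finset O) (hS : ∀ z : O, ∃! s, s ∈ S ∧ s - z ∈ Ideal.span {ϖO}) :
    ∃ ξ : DoubleCoset.Quotient (H0set O) (Kset O) →₀ ℤ,
      (Finsupp.single
          (Quotient.mk'' (((glU (ϖO : F) 0 hϖ0, Units.mk0 (ϖO : F) hϖ0) *
              (glU (ϖO : F) 0 hϖ0, Units.mk0 (ϖO : F) hϖ0) :
            GL (Fin 2) F × Fˣ)) : DoubleCoset.Quotient (H0set O) (Kset O)) (1 : ℤ)
        - (∑ a ∈ S, Finsupp.single
            (Quotient.mk'' ((glU (ϖO : F) 0 hϖ0, Units.mk0 (ϖO : F) hϖ0) *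
                (glU (ϖO : F) ((a : F)) hϖ0, Units.mk0 (ϖO : F) hϖ0)) :
              DoubleCoset.Quotient (H0set O) (Kset O)) (1 : ℤ))
        - Finsupp.single
            (Quotient.mk'' ((glU (ϖO : F) 0 hϖ0, Units.mk0 (ϖO : F) hϖ0) *
                (glD 1 (ϖO : F) one_ne_zero hϖ0, Units.mk0 (ϖO : F) hϖ0)) :
              DoubleCoset.Quotient (H0set O) (Kset O)) (1 : ℤ)
        + (q : ℤ) • Finsupp.single
            (Quotient.mk'' ((glD (ϖO : F) (ϖO : F) hϖ0 hϖ0,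
                Units.mk0 (ϖO : F) hϖ0 * Units.mk0 (ϖO : F) hϖ0)) :
              DoubleCoset.Quotient (H0set O) (Kset O)) (1 : ℤ)) =
      ((q : ℤ) - 1) • ξ := by
  set ϖ : Fˣ := Units.mk0 (ϖO : F) hϖ0
  set Frob : GL (Fin 2) F × Fˣ := (glU (ϖO : F) 0 hϖ0, ϖ)
  let cls (g : GL (Fin 2) F × Fˣ) : DoubleCoset.Quotient (H0set O) (Kset O) := Quotient.mk'' g
  have hcard : #S = q := hq ▸ card_eq_natCard_quotient_of_existsUnique hS
  have hsum : ∑ a ∈ S, Finsupp.single (cls (Frob * (glU (ϖO : F) a hϖ0, ϖ))) (1 : ℤ) =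
      Finsupp.single (cls (Frob * Frob)) 1 +
        ((q : ℤ) - 1) • Finsupp.single (cls (Frob * (glU (ϖO : F) 1 hϖ0, ϖ))) 1 := by
    rw [IsLocalRing.sum_eq_of_existsUnique (hϖ.maximalIdeal_eq ▸ hS)
      (fun a : O => Finsupp.single (cls (Frob * (glU (ϖO : F) a hϖ0, ϖ))) (1 : ℤ))
      (fun a ha => congrArg (Finsupp.single · 1) (mk_glU_mul_glU_eq_of_mem O hϖ0 ϖ
        (inv_mul_mem_of_mem_span_singleton O hϖ0 (hϖ.maximalIdeal_eq ▸ ha))))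
      (fun a ha => by
        obtain ⟨u, rfl⟩ := ha
        exact congrArg (Finsupp.single · 1) (mk_glU_mul_glU_eq_of_unit O hϖ0 ϖ
          (t := Units.map O.subtype.toMonoidHom u) ⟨u.1.2, (u⁻¹ : Oˣ).1.2⟩)),
      hcard]
    rfl
  have hdiag : Frob * (glD 1 (ϖO : F) one_ne_zero hϖ0, ϖ) = (glD (ϖO : F) ϖO hϖ0 hϖ0, ϖ * ϖ) :=
    Prod.ext (glU_mul_glD _ _ hϖ0 hϖ0) rfl
  refine ⟨Finsupp.single (cls (glD (ϖO : F) ϖO hϖ0 hϖ0, ϖ * ϖ)) 1 -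
    Finsupp.single (cls (Frob * (glU (ϖO : F) 1 hϖ0, ϖ))) 1, ?_⟩
  simp only [cls] at hsum ⊢
  -- `Quotient.mk''` lands in `Quotient (DoubleCoset.setoid _ _)`, which `rw` and `module` only
  -- identify with `DoubleCoset.Quotient` once the latter is unfolded
  unfold DoubleCoset.Quotient at hsum ⊢
  rw [hsum, hdiag]
  module

end
end
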